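/- (Pauli-twirl of a product map, Lemma 1.) Let A, B, M be D×D complex matrices. Then (1/D²) ∑_{(a,b)} P(a,b) A P(a,b) · M · P(a,b) B P(a,b) = ∑_{(a,b)} r(a,b) · P(a,b) M P(a,b), where r(a,b) = Tr(P(a,b)·A)·Tr(P(a,b)·B)/D². In particular r(0,0) = Tr(A)Tr(B)/D² and ∑_{(a,b)} r(a,b) = Tr(AB)/D. -/
import Mathlib

open scoped Matrix BigOperators

/-- Integer dot product of two vectors over `𝔽₂`. -/
def dotZ {n : ℕ} (a b : Fin n → ZMod 2) : ℕ := ∑ j, (a j).val * (b j).val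

/-- The Pauli matrix `P(a,b)` on `n` qubits. -/
noncomputable def Pauli {n : ℕ} (a b : Fin n → ZMod 2) :
    Matrix (Fin n → ZMod 2) (Fin n → ZMod 2) ℂ :=
  Matrix.of fun x y =>
    if x = y + a then Complex.I ^ dotZ a b * (-1 : ℂ) ^ dotZ b y else 0

/-- The Pauli-twirl coefficient `r(a,b) = Tr(P(a,b)·A)·Tr(P(a,b)·B)/D²`. -/
noncomputable def pauliCoeff {n : ℕ}
    (A B : Matrix (Fin n → ZMod 2) (Fin n → ZMod 2) ℂ)
    (a b : Fin n → ZMod 2) : ℂ :=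
  (Pauli a b * A).trace * (Pauli a b * B).trace / ((2 : ℂ) ^ n) ^ 2

namespace PT
variable {n : ℕ}

noncomputable def sgn (b x : Fin n → ZMod 2) : ℂ := (-1) ^ dotZ b x

lemma addself (v : Fin n → ZMod 2) : v + v = 0 := by
  funext j; exact CharTwo.add_self_eq_zero (v j)

@[simp] lemma two_mul'' (v : Fin n → ZMod 2) : 2 * v = 0 := by
  rw [two_mul]; exact addself v

@[simp] lemma four_mul'' (v : Fin n → ZMod 2) : 4 * v = 0 := by
  rw [show (4 : Fin n → ZMod 2) = 2 * 2 by norm_num, mul_assoc, two_mul'']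

lemma eq_iff (p q : Fin n → ZMod 2) : p = q ↔ p + q = 0 := by
  constructor
  · rintro rfl; exact addself p
  · intro h
    calc p = p + q + q := by rw [add_assoc, addself, add_zero]
    _ = q := by rw [h, zero_add]

lemma cond (s w : Fin n → ZMod 2) : s + w = 0 ↔ w = s := by
  rw [eq_iff w s, add_comm w s]

lemma eq_add_iff' (x u a : Fin n → ZMod 2) : x = u + a ↔ u = x + a := by
  constructor <;> rintro rfl <;> rw [add_assoc, addself, add_zero]

lemma dotZ_comm (a b : Fin n → ZMod 2) : dotZ a b = dotZ b a := by
  unfold dotZ; exact Finset.sum_congr rfl fun j _ => mul_comm _ _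

lemma dotZ_zero_right (b : Fin n → ZMod 2) : dotZ b 0 = 0 := by
  unfold dotZ; simp

lemma dotZ_zero_left (b : Fin n → ZMod 2) : dotZ 0 b = 0 := by
  rw [dotZ_comm, dotZ_zero_right]

lemma sgn_add_right (b x y : Fin n → ZMod 2) :
    sgn b (x + y) = sgn b x * sgn b y := by
  unfold sgn
  rw [← pow_add, neg_one_pow_eq_pow_mod_two (dotZ b (x+y)),
    neg_one_pow_eq_pow_mod_two (dotZ b x + dotZ b y)]
  congr 1
  unfold dotZ
  rw [← Finset.sum_add_distrib, Finset.sum_nat_mod, Finset.sum_nat_mod _ 2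
    (fun j => (b j).val * (x j).val + (b j).val * (y j).val)]
  congr 1
  refine Finset.sum_congr rfl fun j _ => ?_
  have h1 : ((x + y) j).val = ((x j).val + (y j).val) % 2 := by
    rw [Pi.add_apply, ZMod.val_add]
  rw [h1, ← mul_add]
  exact Nat.ModEq.mul_left (b j).val (Nat.mod_modEq _ 2)

lemma sgn_comm (a b : Fin n → ZMod 2) : sgn a b = sgn b a := by
  unfold sgn; rw [dotZ_comm]

lemma sgn_sq (b x : Fin n → ZMod 2) : sgn b x * sgn b x = 1 := by
  unfold sgn
  rw [← pow_add]
  exact Even.neg_one_pow ⟨dotZ b x, rfl⟩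

lemma sgn_zero_right (b : Fin n → ZMod 2) : sgn b 0 = 1 := by
  unfold sgn; rw [dotZ_zero_right, pow_zero]

lemma sgn_sum (c : Fin n → ZMod 2) :
    ∑ b : Fin n → ZMod 2, sgn b c = if c = 0 then (2:ℂ)^n else 0 := by
  split_ifs with hc
  · subst hc
    simp [sgn_zero_right, Finset.sum_const, Finset.card_univ]
  · obtain ⟨j, hj⟩ : ∃ j, c j ≠ 0 := by
      by_contra h; push_neg at h; exact hc (funext fun j => h j)
    set d : Fin n → ZMod 2 := fun k => if k = j then 1 else 0 with hd
    have hdc : sgn d c = -1 := by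
      unfold sgn
      have : dotZ d c = 1 := by
        unfold dotZ
        rw [Finset.sum_eq_single j]
        · have h2 : (c j).val ≠ 0 := fun h => hj ((ZMod.val_eq_zero _).mp h)
          have h3 : (c j).val < 2 := ZMod.val_lt _
          have h4 : d j = 1 := by simp [hd]
          rw [h4]
          have h5 : (1 : ZMod 2).val = 1 := rfl
          rw [h5, one_mul]; omega
        · intro k _ hk; simp [hd, hk]
        · simp
      rw [this, pow_one]
    have key : ∑ b : Fin n → ZMod 2, sgn b c
        = ∑ b : Fin n → ZMod 2, sgn (b + d) c :=
      (Fintype.sum_equiv (Equiv.addRight d) _ _ (fun b => rfl)).symm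
    have key2 : ∀ b : Fin n → ZMod 2, sgn (b + d) c = - sgn b c := by
      intro b
      rw [sgn_comm, sgn_add_right, sgn_comm c b, sgn_comm c d, hdc]
      ring
    rw [Finset.sum_congr rfl (fun b _ => key2 b), Finset.sum_neg_distrib] at key
    have h2 : (2:ℂ) * ∑ b : Fin n → ZMod 2, sgn b c = 0 := by linear_combination key
    simpa using h2

lemma Pauli_apply' (a b x u : Fin n → ZMod 2) :
    Pauli a b x u = if x = u + a then Complex.I ^ dotZ a b * sgn b u else 0 := rfl

lemma Pauli_apply (a b x u : Fin n → ZMod 2) :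
    Pauli a b x u = if u = x + a then Complex.I ^ dotZ a b * sgn b u else 0 := by
  rw [Pauli_apply', if_congr (eq_add_iff' x u a) rfl rfl]

lemma I_sq' (a b : Fin n → ZMod 2) :
    Complex.I ^ dotZ a b * Complex.I ^ dotZ a b = sgn b a := by
  unfold sgn
  rw [← pow_add, ← two_mul, pow_mul, Complex.I_sq, dotZ_comm]

variable {V : Type}

lemma mulP_left (a b : Fin n → ZMod 2)
    (A : Matrix (Fin n → ZMod 2) (Fin n → ZMod 2) ℂ) (x y : Fin n → ZMod 2) :
    (Pauli a b * A) x y = Complex.I ^ dotZ a b * sgn b (x+a) * A (x+a) y := by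
  rw [Matrix.mul_apply,
    Finset.sum_congr rfl (fun u _ => by rw [Pauli_apply, ite_mul, zero_mul]),
    Finset.sum_ite_eq' Finset.univ (x+a)
      (fun u => Complex.I ^ dotZ a b * sgn b u * A u y)]
  simp

lemma mulP_right (a b : Fin n → ZMod 2)
    (A : Matrix (Fin n → ZMod 2) (Fin n → ZMod 2) ℂ) (x y : Fin n → ZMod 2) :
    (A * Pauli a b) x y = A x (y+a) * (Complex.I ^ dotZ a b * sgn b y) := by
  rw [Matrix.mul_apply,
    Finset.sum_congr rfl (fun v _ => by
      rw [Pauli_apply' a b v y, mul_ite, mul_zero]),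
    Finset.sum_ite_eq' Finset.univ (y+a)
      (fun v => A x v * (Complex.I ^ dotZ a b * sgn b y))]
  simp

lemma trace_Pauli_mul (a b : Fin n → ZMod 2)
    (A : Matrix (Fin n → ZMod 2) (Fin n → ZMod 2) ℂ) :
    (Pauli a b * A).trace
      = Complex.I ^ dotZ a b * ∑ u : Fin n → ZMod 2, sgn b u * A u (u + a) := by
  rw [Matrix.trace, Finset.mul_sum]
  refine Fintype.sum_equiv (Equiv.addRight a) _ _ fun x => ?_
  rw [Matrix.diag_apply, mulP_left]
  show _ = Complex.I ^ dotZ a b * (sgn b (x + a) * A (x + a) (x + a + a))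
  rw [add_assoc, addself, add_zero, mul_assoc]

lemma conj_apply (a b : Fin n → ZMod 2)
    (M : Matrix (Fin n → ZMod 2) (Fin n → ZMod 2) ℂ) (x y : Fin n → ZMod 2) :
    (Pauli a b * M * Pauli a b) x y = sgn b x * sgn b y * M (x+a) (y+a) := by
  rw [mulP_right, mulP_left]
  calc Complex.I ^ dotZ a b * sgn b (x+a) * M (x+a) (y+a)
        * (Complex.I ^ dotZ a b * sgn b y)
      = (Complex.I ^ dotZ a b * Complex.I ^ dotZ a b)
        * (sgn b (x+a) * sgn b y) * M (x+a) (y+a) := by ring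
    _ = sgn b a * (sgn b x * sgn b a * sgn b y) * M (x+a) (y+a) := by
        rw [I_sq', sgn_add_right]
    _ = (sgn b a * sgn b a) * (sgn b x * sgn b y) * M (x+a) (y+a) := by ring
    _ = sgn b x * sgn b y * M (x+a) (y+a) := by rw [sgn_sq, one_mul]

lemma collapse (s : (Fin n → ZMod 2) → (Fin n → ZMod 2))
    (t : (Fin n → ZMod 2) → (Fin n → ZMod 2) → ℂ) :
    ∑ b : Fin n → ZMod 2, ∑ u : Fin n → ZMod 2, ∑ w : Fin n → ZMod 2,
        sgn b (s u + w) * t u w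
      = ∑ u : Fin n → ZMod 2, (2:ℂ)^n * t u (s u) := by
  rw [Finset.sum_comm]
  refine Finset.sum_congr rfl fun u _ => ?_
  rw [Finset.sum_comm]
  have key : ∀ w : Fin n → ZMod 2,
      ∑ b : Fin n → ZMod 2, sgn b (s u + w) * t u w
        = if w = s u then (2:ℂ)^n * t u w else 0 := fun w => by
    rw [← Finset.sum_mul, sgn_sum, ite_mul, zero_mul]
    simp only [cond]
  rw [Finset.sum_congr rfl fun w _ => key w,
    Finset.sum_ite_eq' Finset.univ (s u)
      (fun w => (2:ℂ)^n * t u w)]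
  simp

lemma lhs_entry (A B M : Matrix (Fin n → ZMod 2) (Fin n → ZMod 2) ℂ)
    (x y : Fin n → ZMod 2) :
    ∑ a : Fin n → ZMod 2, ∑ b : Fin n → ZMod 2,
        ((Pauli a b * A * Pauli a b) * M * (Pauli a b * B * Pauli a b)) x y
      = (2:ℂ)^n * ∑ a : Fin n → ZMod 2, ∑ u : Fin n → ZMod 2,
          A (x+a) (u+a) * M u (x+u+y) * B ((x+u+y)+a) (y+a) := by
  rw [Finset.mul_sum]
  refine Finset.sum_congr rfl fun a _ => ?_
  have h1 : ∀ b : Fin n → ZMod 2,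
      ((Pauli a b * A * Pauli a b) * M * (Pauli a b * B * Pauli a b)) x y
        = ∑ u : Fin n → ZMod 2, ∑ v : Fin n → ZMod 2, sgn b ((x+u+y)+v) *
            (A (x+a) (u+a) * M u v * B (v+a) (y+a)) := by
    intro b
    have e1 : ((Pauli a b * A * Pauli a b) * M * (Pauli a b * B * Pauli a b)) x y
        = ∑ v : Fin n → ZMod 2, ∑ u : Fin n → ZMod 2,
            (Pauli a b * A * Pauli a b) x u * M u v
              * (Pauli a b * B * Pauli a b) v y := by
      rw [Matrix.mul_apply]
      refine Finset.sum_congr rfl fun v _ => ?_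
      rw [Matrix.mul_apply, Finset.sum_mul]
    rw [e1, Finset.sum_comm]
    refine Finset.sum_congr rfl fun u _ => Finset.sum_congr rfl fun v _ => ?_
    rw [conj_apply, conj_apply, sgn_add_right b (x+u+y) v,
      sgn_add_right b (x+u) y, sgn_add_right b x u]
    ring
  rw [Finset.sum_congr rfl fun b _ => h1 b, collapse (fun u => x+u+y)
    (fun u v => A (x+a) (u+a) * M u v * B (v+a) (y+a)), Finset.mul_sum]

lemma coeff_eq (A B : Matrix (Fin n → ZMod 2) (Fin n → ZMod 2) ℂ)
    (a b : Fin n → ZMod 2) :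
    pauliCoeff A B a b
      = sgn b a * ((∑ u : Fin n → ZMod 2, sgn b u * A u (u+a))
          * (∑ w : Fin n → ZMod 2, sgn b w * B w (w+a))) / ((2:ℂ)^n)^2 := by
  unfold pauliCoeff
  rw [trace_Pauli_mul, trace_Pauli_mul, ← I_sq']
  ring

lemma rhs_entry (A B M : Matrix (Fin n → ZMod 2) (Fin n → ZMod 2) ℂ)
    (x y : Fin n → ZMod 2) :
    ∑ a : Fin n → ZMod 2, ∑ b : Fin n → ZMod 2,
        pauliCoeff A B a b * ((Pauli a b * M * Pauli a b) x y)
      = ((2:ℂ)^n / ((2:ℂ)^n)^2) * ∑ a : Fin n → ZMod 2, ∑ u : Fin n → ZMod 2,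
          A u (u+a) * M (x+a) (y+a) * B (a+u+x+y) ((a+u+x+y)+a) := by
  rw [Finset.mul_sum]
  refine Finset.sum_congr rfl fun a _ => ?_
  have h1 : ∀ b : Fin n → ZMod 2,
      pauliCoeff A B a b * ((Pauli a b * M * Pauli a b) x y)
        = ∑ u : Fin n → ZMod 2, ∑ w : Fin n → ZMod 2, sgn b ((a+u+x+y)+w) *
            ((A u (u+a) * M (x+a) (y+a) * B w (w+a)) / ((2:ℂ)^n)^2) := by
    intro b
    calc pauliCoeff A B a b * ((Pauli a b * M * Pauli a b) x y)
        = (∑ u : Fin n → ZMod 2, ∑ w : Fin n → ZMod 2,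
              (sgn b u * A u (u+a)) * (sgn b w * B w (w+a))) *
            (sgn b a * (sgn b x * sgn b y * M (x+a) (y+a)) / ((2:ℂ)^n)^2) := by
          rw [coeff_eq, conj_apply, ← Finset.sum_mul_sum]; ring
      _ = _ := by
          rw [Finset.sum_mul]
          refine Finset.sum_congr rfl fun u _ => ?_
          rw [Finset.sum_mul]
          refine Finset.sum_congr rfl fun w _ => ?_
          rw [sgn_add_right b (a+u+x+y) w, sgn_add_right b (a+u+x) y,
            sgn_add_right b (a+u) x, sgn_add_right b a u]
          ring
  rw [Finset.sum_congr rfl fun b _ => h1 b, collapse (fun u => a+u+x+y)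
    (fun u w => (A u (u+a) * M (x+a) (y+a) * B w (w+a)) / ((2:ℂ)^n)^2),
    Finset.mul_sum]
  refine Finset.sum_congr rfl fun u _ => ?_
  ring

lemma reindex (A B M : Matrix (Fin n → ZMod 2) (Fin n → ZMod 2) ℂ)
    (x y : Fin n → ZMod 2) :
    ∑ a : Fin n → ZMod 2, ∑ u : Fin n → ZMod 2,
        A (x+a) (u+a) * M u (x+u+y) * B ((x+u+y)+a) (y+a)
      = ∑ a : Fin n → ZMod 2, ∑ u : Fin n → ZMod 2,
          A u (u+a) * M (x+a) (y+a) * B (a+u+x+y) ((a+u+x+y)+a) := by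
  rw [← Finset.sum_product', ← Finset.sum_product', Finset.univ_product_univ]
  refine Fintype.sum_equiv
    ⟨fun p => (p.2 + x, x + p.1), fun p => (p.2 + x, x + p.1), ?_, ?_⟩ _ _ ?_
  · rintro ⟨a, u⟩
    refine Prod.ext ?_ ?_ <;> simp only [] <;> rw [eq_iff] <;> abel_nf <;> simp
  · rintro ⟨a, u⟩
    refine Prod.ext ?_ ?_ <;> simp only [] <;> rw [eq_iff] <;> abel_nf <;> simp
  · rintro ⟨a, u⟩
    simp only [Equiv.coe_fn_mk]
    have h1 : (x+a)+(u+x) = u+a := by rw [eq_iff]; abel_nf; simp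
    have h2 : x+(u+x) = u := by rw [eq_iff]; abel_nf; simp
    have h3 : y+(u+x) = x+u+y := by rw [eq_iff]; abel_nf; simp
    have h4 : (u+x)+(x+a)+x+y = (x+u+y)+a := by rw [eq_iff]; abel_nf; simp
    have h5 : ((u+x)+(x+a)+x+y)+(u+x) = y+a := by rw [eq_iff]; abel_nf; simp
    rw [h1, h2, h3, h5, h4]

lemma Pauli_zero : (Pauli (0 : Fin n → ZMod 2) 0) = 1 := by
  ext x y
  rw [Pauli_apply', Matrix.one_apply]
  simp [sgn, dotZ_zero_left]

lemma sum_coeff (A B : Matrix (Fin n → ZMod 2) (Fin n → ZMod 2) ℂ) :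
    ∑ a : Fin n → ZMod 2, ∑ b : Fin n → ZMod 2, pauliCoeff A B a b
      = ((2:ℂ)^n / ((2:ℂ)^n)^2) * ∑ a : Fin n → ZMod 2, ∑ u : Fin n → ZMod 2,
          A u (u+a) * B (a+u) ((a+u)+a) := by
  rw [Finset.mul_sum]
  refine Finset.sum_congr rfl fun a _ => ?_
  have h1 : ∀ b : Fin n → ZMod 2, pauliCoeff A B a b
      = ∑ u : Fin n → ZMod 2, ∑ w : Fin n → ZMod 2,
          sgn b ((a+u)+w) * ((A u (u+a) * B w (w+a)) / ((2:ℂ)^n)^2) := by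
    intro b
    calc pauliCoeff A B a b
        = (∑ u : Fin n → ZMod 2, ∑ w : Fin n → ZMod 2,
              (sgn b u * A u (u+a)) * (sgn b w * B w (w+a))) *
            (sgn b a / ((2:ℂ)^n)^2) := by
          rw [coeff_eq, ← Finset.sum_mul_sum]; ring
      _ = _ := by
          rw [Finset.sum_mul]
          refine Finset.sum_congr rfl fun u _ => ?_
          rw [Finset.sum_mul]
          refine Finset.sum_congr rfl fun w _ => ?_
          rw [sgn_add_right b (a+u) w, sgn_add_right b a u]
          ring
  rw [Finset.sum_congr rfl fun b _ => h1 b, collapse (fun u => a+u)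
    (fun u w => (A u (u+a) * B w (w+a)) / ((2:ℂ)^n)^2), Finset.mul_sum]
  refine Finset.sum_congr rfl fun u _ => ?_
  ring

lemma sum_AB (A B : Matrix (Fin n → ZMod 2) (Fin n → ZMod 2) ℂ) :
    ∑ a : Fin n → ZMod 2, ∑ u : Fin n → ZMod 2, A u (u+a) * B (a+u) ((a+u)+a)
      = (A * B).trace := by
  have htr : (A*B).trace = ∑ u : Fin n → ZMod 2, ∑ v : Fin n → ZMod 2,
      A u v * B v u := by
    rw [Matrix.trace]
    exact Finset.sum_congr rfl fun u _ => by
      rw [Matrix.diag_apply, Matrix.mul_apply]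
  rw [htr, ← Finset.sum_product', ← Finset.sum_product', Finset.univ_product_univ]
  refine Fintype.sum_equiv
    ⟨fun p => (p.2, p.2 + p.1), fun p => (p.1 + p.2, p.1), ?_, ?_⟩ _ _ ?_
  · rintro ⟨a, u⟩
    refine Prod.ext ?_ ?_ <;> simp only [] <;> rw [eq_iff] <;> abel_nf <;> simp
  · rintro ⟨u, v⟩
    refine Prod.ext ?_ ?_ <;> simp only [] <;> rw [eq_iff] <;> abel_nf <;> simp
  · rintro ⟨a, u⟩
    simp only [Equiv.coe_fn_mk]
    rw [add_comm a u, show (u+a)+a = u from by rw [eq_iff]; abel_nf; simp]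

end PT

/-- Pauli-twirl of a product map, Lemma 1. -/
theorem pauli_twirl_product_map (n : ℕ) (hn : 1 ≤ n)
    (A B M : Matrix (Fin n → ZMod 2) (Fin n → ZMod 2) ℂ) :
    ((1 : ℂ) / ((2 : ℂ) ^ n) ^ 2) •
        ∑ a : Fin n → ZMod 2, ∑ b : Fin n → ZMod 2,
          (Pauli a b * A * Pauli a b) * M * (Pauli a b * B * Pauli a b) =
      ∑ a : Fin n → ZMod 2, ∑ b : Fin n → ZMod 2,
        pauliCoeff A B a b • (Pauli a b * M * Pauli a b) ∧
    pauliCoeff A B 0 0 = A.trace * B.trace / ((2 : ℂ) ^ n) ^ 2 ∧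
    ∑ a : Fin n → ZMod 2, ∑ b : Fin n → ZMod 2, pauliCoeff A B a b =
      (A * B).trace / (2 : ℂ) ^ n := by
  have hD : ((2:ℂ)^n) ≠ 0 := pow_ne_zero _ two_ne_zero
  refine ⟨?_, ?_, ?_⟩
  · ext x y
    simp only [Matrix.sum_apply, Matrix.smul_apply, smul_eq_mul]
    rw [PT.lhs_entry, PT.rhs_entry, PT.reindex A B M x y]
    ring
  · unfold pauliCoeff
    rw [PT.Pauli_zero, one_mul, one_mul]
  · rw [PT.sum_coeff, PT.sum_AB]
    field_simp
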